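/- For every one-way deterministic one-counter automaton M over the alphabet {a,b,c,d} and every N ∈ ℕ, there exist strings u₁ ∈ ONE and u₂ ∈ NONE such that, writing (s₁,v₁) and (s₂,v₂) for the configurations of M after reading ¢u₁ and ¢u₂ respectively, either (s₁,v₁) = (s₂,v₂), or s₁ = s₂ and |v₁| > N and |v₂| > N. -/

import Mathlib

/-- Input symbols extended with the left (`cent`) and right (`dollar`) end-markers. -/
inductive TSym (α : Type) : Type
  | cent : TSym α
  | letter : α → TSym α
  | dollar : TSym α

/-- The tape content `¢ w $` for an input word `w`. -/
def tagged {α : Type} (w : List α) : List (TSym α) :=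
  TSym.cent :: (w.map TSym.letter ++ [TSym.dollar])

/-- A one-way deterministic one-counter automaton. -/
structure OneD1CA (α : Type) where
  Q : Type
  [fintypeQ : Fintype Q]
  [decQ : DecidableEq Q]
  q0 : Q
  acc : Set Q
  m : ℕ
  δ : Q → TSym α → Bool → Q × ℤ
  bound : ∀ q σ z, |(δ q σ z).2| ≤ (m : ℤ)

attribute [instance] OneD1CA.fintypeQ OneD1CA.decQ

namespace OneD1CA

variable {α : Type} (M : OneD1CA α)

/-- One computation step on a configuration (state, counter value). -/
def step (p : M.Q × ℤ) (σ : TSym α) : M.Q × ℤ :=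
  ((M.δ p.1 σ (decide (p.2 = 0))).1, p.2 + (M.δ p.1 σ (decide (p.2 = 0))).2)

/-- Configuration reached from the initial configuration after reading a list of tape symbols. -/
def confAfter (l : List (TSym α)) : M.Q × ℤ :=
  l.foldl M.step (M.q0, 0)

/-- The automaton accepts `w` iff the state after reading `¢ w $` is accepting. -/
def accepts (w : List α) : Prop :=
  (M.confAfter (tagged w)).1 ∈ M.acc

/-- The automaton recognizes the language `L` if it accepts exactly the members of `L`. -/
def recognizes (L : Set (List α)) : Prop :=
  ∀ w : List α, M.accepts w ↔ w ∈ L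

end OneD1CA

/-- The alphabet `{a, b, c, d}`. -/
inductive ΓN : Type
  | a : ΓN
  | b : ΓN
  | c : ΓN
  | d : ΓN
deriving DecidableEq

/-- Exactly one of three propositions holds. -/
def exactlyOne (P Q R : Prop) : Prop :=
  (P ∧ ¬Q ∧ ¬R) ∨ (¬P ∧ Q ∧ ¬R) ∨ (¬P ∧ ¬Q ∧ R)

/-- `#_a(u) = #_b(u)`. -/
def eqAB (u : List ΓN) : Prop := u.count ΓN.a = u.count ΓN.b
/-- `#_b(u) = #_c(u)`. -/
def eqBC (u : List ΓN) : Prop := u.count ΓN.b = u.count ΓN.c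
/-- `#_c(u) = #_a(u)`. -/
def eqCA (u : List ΓN) : Prop := u.count ΓN.c = u.count ΓN.a

/-- The language `ONE`: strings `u ++ y` with `u ∈ {a,b,c}*`, `y ∈ {d}*`,
`|y| ≥ |u|`, and exactly one of the three count equalities holding for `u`. -/
def ONE : Language ΓN :=
  {w | ∃ u y : List ΓN, w = u ++ y ∧ (∀ x ∈ u, x ≠ ΓN.d) ∧ (∀ x ∈ y, x = ΓN.d) ∧
    u.length ≤ y.length ∧ exactlyOne (eqAB u) (eqBC u) (eqCA u)}

/-- The language `NONE`: as `ONE`, but none of the three count equalities holds. -/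
def NONE : Language ΓN :=
  {w | ∃ u y : List ΓN, w = u ++ y ∧ (∀ x ∈ u, x ≠ ΓN.d) ∧ (∀ x ∈ y, x = ΓN.d) ∧
    u.length ≤ y.length ∧ ¬ eqAB u ∧ ¬ eqBC u ∧ ¬ eqCA u}

/-!
If two prefixes `¢aⁱ` and `¢aʲ` with `i ≠ j` reach the
same configuration, the words `aⁱbⁱcᶻ` and `aʲbⁱcᶻ` (`z` large) cannot be told apart, and the first
satisfies exactly one count equality while the second satisfies none.

Otherwise the configurations after `¢aⁱ` are pairwise distinct, so the counter leaves every
bounded region and the zero test eventually never fires. From then on, reading `a`s or `b`s is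
a finite-state walk whose counter changes by a fixed drift per cycle; the `a`-cycle has drift
`d ≠ 0`. Pumping the `b`-cycle (drift `d'`) `|d|` extra times is compensated by changing the number
of `a`-cycles, so `aˣbˢcˢ` and `aˣ'bˢ⁺ᴿcˢ` reach the same configuration for `x, x'` large; the first
word has only `#b = #c`, the second no equality at all.
-/

open Filter Function

theorem eventually_lt_abs_snd_of_injective {Q : Type*} [Finite Q] {f : ℕ → Q × ℤ}
    (hf : Injective f) (B : ℤ) : ∀ᶠ i in atTop, B < |(f i).2| := by
  have hsmall : {x : Q × ℤ | |x.2| ≤ B}.Finite :=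
    (Set.finite_univ.prod (Set.finite_Icc (-B) B)).subset fun x hx => ⟨trivial, abs_le.mp hx⟩
  rw [← Nat.cofinite_eq_atTop]
  simpa using hf.tendsto_cofinite hsmall.compl_mem_cofinite

theorem exists_iterate_add_mul_eq {Q : Type*} [Finite Q] {g : Q × ℤ → Q × ℤ}
    (hg : ∀ w : ℤ, Function.Commute g (Prod.map id (· + w))) (p : Q × ℤ) :
    ∃ (t₀ n : ℕ) (d : ℤ), 0 < n ∧
      ∀ e : ℕ, g^[t₀ + e * n] p = Prod.map id (· + e * d) (g^[t₀] p) := by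
  obtain ⟨t₁, t₂, hlt, hstate⟩ := Set.finite_univ.exists_lt_map_eq_of_forall_mem
    (f := fun t => (g^[t] p).1) (fun _ => Set.mem_univ _)
  set d := (g^[t₂] p).2 - (g^[t₁] p).2
  have hcycle : g^[t₂ - t₁] (g^[t₁] p) = Prod.map id (· + d) (g^[t₁] p) := by
    rw [← iterate_add_apply, Nat.sub_add_cancel hlt.le]
    exact Prod.ext hstate.symm (by simp [d])
  refine ⟨t₁, t₂ - t₁, d, Nat.sub_pos_of_lt hlt, fun e => ?_⟩
  induction e with
  | zero => simp; rfl
  | succ e ih =>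
    rw [add_one_mul, ← add_assoc, add_comm _ (t₂ - t₁), iterate_add_apply, ih,
      ((hg _).iterate_left _).eq, hcycle]
    ext
    · rfl
    · simp only [Prod.map_snd, Nat.cast_succ]
      ring

namespace OneD1CA

variable {α : Type} (M : OneD1CA α)

/-- The move on `σ` when the zero test answers that the counter is nonzero. -/
def blindStep (σ : TSym α) (p : M.Q × ℤ) : M.Q × ℤ :=
  ((M.δ p.1 σ false).1, p.2 + (M.δ p.1 σ false).2)

variable {M}

theorem step_eq_blindStep {p : M.Q × ℤ} (hp : p.2 ≠ 0) (σ : TSym α) :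
    M.step p σ = M.blindStep σ p := by
  simp [step, blindStep, hp]

theorem blindStep_commute_shift (σ : TSym α) (w : ℤ) :
    Function.Commute (M.blindStep σ) (Prod.map id (· + w)) := fun p => by
  ext <;> simp only [blindStep, Prod.map_fst, Prod.map_snd, id]
  ring

theorem abs_iterate_blindStep_sub_le (σ : TSym α) (p : M.Q × ℤ) (t : ℕ) :
    |((M.blindStep σ)^[t] p).2 - p.2| ≤ M.m * t := by
  induction t with
  | zero => simp
  | succ t ih =>
    rw [iterate_succ_apply']
    calc |(M.blindStep σ ((M.blindStep σ)^[t] p)).2 - p.2|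
        = |(((M.blindStep σ)^[t] p).2 - p.2) + (M.δ ((M.blindStep σ)^[t] p).1 σ false).2| := by
          rw [blindStep, add_sub_right_comm]
      _ ≤ M.m * t + M.m := (abs_add_le _ _).trans (add_le_add ih (M.bound _ _ _))
      _ = M.m * (t + 1 : ℕ) := by push_cast; ring

theorem foldl_replicate_eq_iterate_blindStep {σ : TSym α} {p : M.Q × ℤ} {T : ℕ}
    (h : ∀ t < T, ((List.replicate t σ).foldl M.step p).2 ≠ 0) :
    (List.replicate T σ).foldl M.step p = (M.blindStep σ)^[T] p := by
  induction T with
  | zero => rfl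
  | succ T ih =>
    rw [List.replicate_succ', List.foldl_append, iterate_succ_apply',
      ← ih fun t ht => h t (by omega)]
    exact step_eq_blindStep (h T T.lt_succ_self) σ

theorem foldl_replicate_eq_iterate_blindStep_of_lt_abs {σ : TSym α} {p : M.Q × ℤ} {T : ℕ}
    (h : M.m * T < |p.2|) :
    (List.replicate T σ).foldl M.step p = (M.blindStep σ)^[T] p := by
  induction T using Nat.strong_induction_on with
  | _ T ih =>
    refine foldl_replicate_eq_iterate_blindStep fun t ht hzero => ?_
    have hmt : (M.m : ℤ) * t ≤ M.m * T := by gcongr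
    rw [ih t ht (by linarith)] at hzero
    have := abs_iterate_blindStep_sub_le σ p t
    rw [hzero, zero_sub, abs_neg] at this
    linarith

theorem exists_foldl_replicate_add_mul_eq_of_injective {σ : TSym α} {p : M.Q × ℤ}
    (hinj : Injective fun i => (List.replicate i σ).foldl M.step p) :
    ∃ (x₀ n : ℕ) (q : M.Q) (v d : ℤ), 0 < n ∧ d ≠ 0 ∧
      ∀ l : ℕ, (List.replicate (x₀ + l * n) σ).foldl M.step p = (q, v + l * d) := by
  set f := fun i => (List.replicate i σ).foldl M.step p
  have hf_add (i k : ℕ) : f (i + k) = (List.replicate k σ).foldl M.step (f i) := by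
    simp only [f, List.replicate_add, List.foldl_append]
  obtain ⟨I, hI⟩ := (eventually_lt_abs_snd_of_injective hinj 0).exists_forall_of_atTop
  have hblind (k : ℕ) : f (I + k) = (M.blindStep σ)^[k] (f I) := by
    rw [hf_add]
    refine foldl_replicate_eq_iterate_blindStep fun t _ => ?_
    rw [← hf_add]
    exact abs_pos.mp (hI _ (by omega))
  obtain ⟨t₀, n, d, hn, hper⟩ := exists_iterate_add_mul_eq (blindStep_commute_shift σ) (f I)
  refine ⟨I + t₀, n, ((M.blindStep σ)^[t₀] (f I)).1, ((M.blindStep σ)^[t₀] (f I)).2, d, hn,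
    ?_, fun l => ?_⟩
  · rintro rfl
    have : f (I + (t₀ + 0 * n)) = f (I + (t₀ + 1 * n)) := by
      rw [hblind, hblind, hper, hper]
      simp
    have := hinj this
    omega
  · change f (I + t₀ + l * n) = _
    rw [add_assoc, hblind, hper]
    rfl

theorem exists_foldl_replicate_eq_of_injective {σ : TSym α} {p : M.Q × ℤ}
    (hinj : Injective fun i => (List.replicate i σ).foldl M.step p) (τ : TSym α) :
    ∃ s R : ℕ, 0 < R ∧ ∀ L : ℕ, ∃ x x' : ℕ, L ≤ x ∧ L ≤ x' ∧
      (List.replicate s τ).foldl M.step ((List.replicate x σ).foldl M.step p) =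
        (List.replicate (s + R) τ).foldl M.step ((List.replicate x' σ).foldl M.step p) := by
  obtain ⟨x₀, n, q, v, d, hn, hd, hdrift⟩ := exists_foldl_replicate_add_mul_eq_of_injective hinj
  obtain ⟨s, n', d', hn', hper⟩ := exists_iterate_add_mul_eq (blindStep_commute_shift τ) (q, 0)
  set R := d.natAbs * n'
  refine ⟨s, R, Nat.mul_pos (Int.natAbs_pos.mpr hd) hn', fun L => ?_⟩
  obtain ⟨I, hI⟩ :=
    (eventually_lt_abs_snd_of_injective hinj (M.m * (s + R : ℕ))).exists_forall_of_atTop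
  -- `|d|` extra `τ`-cycles shift the counter by `|d| * d' = d * k`: that is `k` more `σ`-cycles.
  obtain ⟨k, hk⟩ : d ∣ d.natAbs * d' := Dvd.dvd.mul_right Int.dvd_natAbs_self d'
  obtain ⟨l, l', hl, hl', hll'⟩ : ∃ l l' : ℕ, max L I ≤ l ∧ max L I ≤ l' ∧ (l : ℤ) = l' + k :=
    ⟨max L I + k.toNat, max L I + (-k).toNat, by omega, by omega, by omega⟩
  have hlen {l : ℕ} : l ≤ x₀ + l * n := le_add_left (Nat.le_mul_of_pos_right l hn)
  have hrun {l : ℕ} (hl : max L I ≤ l) {T : ℕ} (hT : T ≤ s + R) :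
      (List.replicate T τ).foldl M.step ((List.replicate (x₀ + l * n) σ).foldl M.step p) =
        Prod.map id (· + (v + l * d)) ((M.blindStep τ)^[T] (q, 0)) := by
    have hbig := hI (x₀ + l * n) (by have := @hlen l; omega)
    rw [hdrift] at hbig ⊢
    rw [foldl_replicate_eq_iterate_blindStep_of_lt_abs,
      ← ((blindStep_commute_shift τ _).iterate_left T).eq]
    · simp
    · exact lt_of_le_of_lt (by gcongr) hbig
  refine ⟨x₀ + l * n, x₀ + l' * n, le_trans (le_max_left _ _) (hl.trans hlen),
    le_trans (le_max_left _ _) (hl'.trans hlen), ?_⟩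
  rw [hrun hl (by omega), hrun hl' le_rfl, hper]
  ext
  · rfl
  · simp only [Prod.map_snd, hll']
    linear_combination (-1 : ℤ) * hk

end OneD1CA

theorem OneD1CA.confAfter_cent_append {α : Type} (M : OneD1CA α) (u v : List α) :
    M.confAfter (TSym.cent :: (u ++ v).map TSym.letter) =
      (v.map TSym.letter).foldl M.step (M.confAfter (TSym.cent :: u.map TSym.letter)) := by
  rw [List.map_append, ← List.cons_append, OneD1CA.confAfter, List.foldl_append]
  rfl

def abcWord (x y z : ℕ) : List ΓN :=
  List.replicate x ΓN.a ++ List.replicate y ΓN.b ++ List.replicate z ΓN.c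

section abcWord

variable {x y z K : ℕ}

@[simp] theorem count_a_abcWord : (abcWord x y z).count ΓN.a = x := by
  simp [abcWord, List.count_replicate]
@[simp] theorem count_b_abcWord : (abcWord x y z).count ΓN.b = y := by
  simp [abcWord, List.count_replicate]
@[simp] theorem count_c_abcWord : (abcWord x y z).count ΓN.c = z := by
  simp [abcWord, List.count_replicate]

theorem ne_d_of_mem_abcWord {t : ΓN} (ht : t ∈ abcWord x y z) : t ≠ ΓN.d := by
  simp only [abcWord, List.mem_append, List.mem_replicate] at ht
  rcases ht with (⟨-, rfl⟩ | ⟨-, rfl⟩) | ⟨-, rfl⟩ <;> decide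

theorem abcWord_append_mem_ONE (hK : x + y + z ≤ K) (h : exactlyOne (x = y) (y = z) (z = x)) :
    abcWord x y z ++ List.replicate K ΓN.d ∈ ONE :=
  ⟨abcWord x y z, _, rfl, fun _ => ne_d_of_mem_abcWord, fun _ => List.eq_of_mem_replicate,
    by simp [abcWord]; omega, by simpa [exactlyOne, eqAB, eqBC, eqCA] using h⟩

theorem abcWord_append_mem_NONE (hK : x + y + z ≤ K) (hxy : x ≠ y) (hyz : y ≠ z) (hzx : z ≠ x) :
    abcWord x y z ++ List.replicate K ΓN.d ∈ NONE :=
  ⟨abcWord x y z, _, rfl, fun _ => ne_d_of_mem_abcWord, fun _ => List.eq_of_mem_replicate,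
    by simp [abcWord]; omega, by simpa [eqAB] using hxy, by simpa [eqBC] using hyz,
    by simpa [eqCA] using hzx⟩

theorem abcWord_append (v : List ΓN) :
    abcWord x y z ++ v =
      (List.replicate x ΓN.a ++ List.replicate y ΓN.b) ++ (List.replicate z ΓN.c ++ v) := by
  simp [abcWord]

end abcWord

theorem exists_confAfter_ab_eq (M : OneD1CA ΓN) :
    ∃ x y z x' y' : ℕ, exactlyOne (x = y) (y = z) (z = x) ∧ x' ≠ y' ∧ y' ≠ z ∧ z ≠ x' ∧
      M.confAfter (TSym.cent :: (List.replicate x ΓN.a ++ List.replicate y ΓN.b).map TSym.letter) =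
        M.confAfter
          (TSym.cent :: (List.replicate x' ΓN.a ++ List.replicate y' ΓN.b).map TSym.letter) := by
  set p := M.step (M.q0, 0) TSym.cent
  have hab (x y : ℕ) :
      M.confAfter (TSym.cent :: (List.replicate x ΓN.a ++ List.replicate y ΓN.b).map TSym.letter) =
        (List.replicate y (TSym.letter ΓN.b)).foldl M.step
          ((List.replicate x (TSym.letter ΓN.a)).foldl M.step p) := by
    simp [OneD1CA.confAfter, List.foldl_append, p]
  simp only [hab]
  by_cases hinj : Injective fun i => (List.replicate i (TSym.letter ΓN.a)).foldl M.step p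
  · obtain ⟨s, R, hR, hpump⟩ :=
      OneD1CA.exists_foldl_replicate_eq_of_injective hinj (TSym.letter ΓN.b)
    obtain ⟨x, x', hx, hx', heq⟩ := hpump (s + R + 1)
    exact ⟨x, s, s, x', s + R, Or.inr (Or.inl ⟨by omega, rfl, by omega⟩), by omega, by omega,
      by omega, heq⟩
  · obtain ⟨i, j, hij, hne⟩ := not_injective_iff.mp hinj
    exact ⟨i, i, i + j + 1, j, i, Or.inl ⟨rfl, by omega, by omega⟩, Ne.symm hne, by omega,
      by omega, by rw [hij]⟩

/-- for every 1D1CA `M` and every `N`, there are `u₁ ∈ ONE` and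
`u₂ ∈ NONE` reaching either the same configuration after `¢u₁` resp. `¢u₂`, or the
same state with both counter values of absolute value exceeding `N`. -/
theorem stmt9 (M : OneD1CA ΓN) (N : ℕ) :
    ∃ u1 u2 : List ΓN, u1 ∈ ONE ∧ u2 ∈ NONE ∧
      (M.confAfter (TSym.cent :: u1.map TSym.letter) =
          M.confAfter (TSym.cent :: u2.map TSym.letter) ∨
        ((M.confAfter (TSym.cent :: u1.map TSym.letter)).1 =
            (M.confAfter (TSym.cent :: u2.map TSym.letter)).1 ∧
          (N : ℤ) < |(M.confAfter (TSym.cent :: u1.map TSym.letter)).2| ∧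
          (N : ℤ) < |(M.confAfter (TSym.cent :: u2.map TSym.letter)).2|)) := by
  obtain ⟨x, y, z, x', y', hone, hxy', hyz', hzx', hconf⟩ := exists_confAfter_ab_eq M
  set K := x + y + z + x' + y'
  refine ⟨abcWord x y z ++ List.replicate K ΓN.d, abcWord x' y' z ++ List.replicate K ΓN.d,
    abcWord_append_mem_ONE (by omega) hone, abcWord_append_mem_NONE (by omega) hxy' hyz' hzx',
    Or.inl ?_⟩
  rw [abcWord_append, abcWord_append, M.confAfter_cent_append _ (_ ++ List.replicate K ΓN.d),
    M.confAfter_cent_append _ (_ ++ List.replicate K ΓN.d), hconf]
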